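/- Let W₁, …, Wₙ be independent real-valued random variables, each distributed as a centered Gaussian N(0, σ²) with σ > 0. Define S⁺ = Σᵢ max(Wᵢ, 0) and S⁻ = Σᵢ max(−Wᵢ, 0). Let f : ℝ → ℝ be measurable with f(S⁺) integrable, and assume P(f(S⁺) = f(S⁻)) = 0. Define Z = f(S⁺)·1{f(S⁺) > f(S⁻)} − f(S⁻)·1{f(S⁻) ≥ f(S⁺)}. Then E[Z] = 0. -/

import Mathlib

/-!
The negation `W ↦ -W` preserves the law of the Gaussian vector `W` and swaps `S⁺` and `S⁻`.
Off the null set where `f(S⁺) = f(S⁻)`, `Z` is an antisymmetric function of `(f(S⁺), f(S⁻))`,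
so `Z` and `-Z` have the same integral, which is therefore `0`.
-/

open MeasureTheory ProbabilityTheory

instance gaussianReal_zero_isNegInvariant (v : NNReal) : (gaussianReal 0 v).IsNegInvariant :=
  ⟨(gaussianReal_map_neg (μ := 0) (v := v)).trans (by rw [neg_zero])⟩

theorem integral_eq_zero_of_odd {G : Type*} [AddGroup G] [MeasurableSpace G] [MeasurableNeg G]
    (μ : Measure G) [μ.IsNegInvariant] {h : G → ℝ} (hodd : h.Odd) : ∫ x, h x ∂μ = 0 := by
  have hself := integral_neg_eq_self h μ
  rw [funext hodd, integral_neg] at hself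
  exact neg_eq_self.mp hself

/-- `sign(argmax(a, b)) · max(a, b)`, with value `0` on ties. -/
noncomputable def signedMax (a b : ℝ) : ℝ :=
  if b < a then a else if a < b then -b else 0

theorem signedMax_swap (a b : ℝ) : signedMax b a = -signedMax a b := by
  unfold signedMax
  split_ifs <;> linarith

theorem signedMax_eq_of_ne {a b : ℝ} (hab : a ≠ b) :
    a * (if a > b then (1 : ℝ) else 0) - b * (if b ≥ a then (1 : ℝ) else 0) =
      signedMax a b := by
  unfold signedMax
  rcases hab.lt_or_gt with hlt | hlt <;> simp [hlt, hlt.le, hlt.not_gt, hlt.not_ge]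

theorem Measurable.signedMax {α : Type*} [MeasurableSpace α] {F G : α → ℝ} (hF : Measurable F)
    (hG : Measurable G) : Measurable fun x => signedMax (F x) (G x) :=
  hF.ite (measurableSet_lt hG hF) <| hG.neg.ite (measurableSet_lt hF hG) measurable_const

theorem integral_signedMax_comp_neg_eq_zero {Ω G : Type*} [MeasurableSpace Ω] [AddGroup G]
    [MeasurableSpace G] [MeasurableNeg G] {P : Measure Ω} {X : Ω → G} (hX : AEMeasurable X P)
    (hsymm : (P.map X).IsNegInvariant) {g : G → ℝ} (hg : Measurable g) :
    ∫ ω, signedMax (g (X ω)) (g (-X ω)) ∂P = 0 := by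
  have hmeas : Measurable fun x => signedMax (g x) (g (-x)) := hg.signedMax (hg.comp measurable_neg)
  rw [← integral_map hX hmeas.aestronglyMeasurable]
  exact integral_eq_zero_of_odd _ fun x => by rw [neg_neg, signedMax_swap]

theorem hcore_init_gaussian_mean_zero_general
    {Ω : Type*} [MeasurableSpace Ω]
    (P : Measure Ω) [IsProbabilityMeasure P]
    (n : ℕ) (W : Fin n → Ω → ℝ)
    (hmeas : ∀ i, Measurable (W i))
    (hindep : iIndepFun W P)
    (σ : NNReal)
    (hgauss : ∀ i, Measure.map (W i) P = gaussianReal 0 (σ ^ 2))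
    (Spos Sneg : Ω → ℝ)
    (hSpos : Spos = fun ω => ∑ i, max (W i ω) 0)
    (hSneg : Sneg = fun ω => ∑ i, max (-(W i ω)) 0)
    (f : ℝ → ℝ) (hf : Measurable f)
    (hnull : P {ω | f (Spos ω) = f (Sneg ω)} = 0)
    (Z : Ω → ℝ)
    (hZ : Z = fun ω =>
      f (Spos ω) * (if f (Spos ω) > f (Sneg ω) then (1 : ℝ) else 0)
        - f (Sneg ω) * (if f (Sneg ω) ≥ f (Spos ω) then (1 : ℝ) else 0)) :
    ∫ ω, Z ω ∂P = 0 := by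
  subst hZ hSpos hSneg
  set X : Ω → Fin n → ℝ := fun ω i => W i ω
  have hlaw : P.map X = Measure.pi fun _ => gaussianReal 0 (σ ^ 2) := by
    rw [hindep.map_fun_eq_pi_map fun i => (hmeas i).aemeasurable]
    simp_rw [hgauss]
  have hsymm : (P.map X).IsNegInvariant := hlaw ▸ inferInstance
  have hg : Measurable fun x : Fin n → ℝ => f (∑ i, max (x i) 0) := hf.comp (by fun_prop)
  have hties : ∀ᵐ ω ∂P, f (∑ i, max (W i ω) 0) ≠ f (∑ i, max (-W i ω) 0) :=
    ae_iff.mpr (by simpa using hnull)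
  calc _ = ∫ ω, signedMax (f (∑ i, max (X ω i) 0)) (f (∑ i, max ((-X ω) i) 0)) ∂P :=
        integral_congr_ae (hties.mono fun ω hω => signedMax_eq_of_ne hω)
    _ = 0 :=
        integral_signedMax_comp_neg_eq_zero (measurable_pi_lambda _ hmeas).aemeasurable hsymm hg

/-- Let `W₁, …, Wₙ` be independent centered Gaussian `N(0, σ²)` random variables
with `σ > 0`, and let `S⁺ = Σᵢ max(Wᵢ, 0)`, `S⁻ = Σᵢ max(−Wᵢ, 0)`. If `f : ℝ → ℝ`
is measurable with `f(S⁺)` integrable and the event `f(S⁺) = f(S⁻)` is null, then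
`Z = f(S⁺)·1{f(S⁺) > f(S⁻)} − f(S⁻)·1{f(S⁻) ≥ f(S⁺)}` has mean `0`. -/
theorem hcore_init_gaussian_mean_zero
    {Ω : Type*} [MeasurableSpace Ω]
    (P : Measure Ω) [IsProbabilityMeasure P]
    (n : ℕ) (W : Fin n → Ω → ℝ)
    (hmeas : ∀ i, Measurable (W i))
    (hindep : iIndepFun W P)
    (σ : NNReal) (hσ : 0 < σ)
    (hgauss : ∀ i, Measure.map (W i) P = gaussianReal 0 (σ ^ 2))
    (Spos Sneg : Ω → ℝ)
    (hSpos : Spos = fun ω => ∑ i, max (W i ω) 0)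
    (hSneg : Sneg = fun ω => ∑ i, max (-(W i ω)) 0)
    (f : ℝ → ℝ) (hf : Measurable f)
    (hint : Integrable (fun ω => f (Spos ω)) P)
    (hnull : P {ω | f (Spos ω) = f (Sneg ω)} = 0)
    (Z : Ω → ℝ)
    (hZ : Z = fun ω =>
      f (Spos ω) * (if f (Spos ω) > f (Sneg ω) then (1 : ℝ) else 0)
        - f (Sneg ω) * (if f (Sneg ω) ≥ f (Spos ω) then (1 : ℝ) else 0)) :
    ∫ ω, Z ω ∂P = 0 :=
  hcore_init_gaussian_mean_zero_general P n W hmeas hindep σ hgauss Spos Sneg hSpos hSneg f hf hnull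
    Z hZ
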